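/- arXiv:2508.01133 — 4 statements merged into one kernel-verified Lean document; each statement's English description precedes it below -/
import Mathlib

section
/- Let Q : ℝ → ℂ^{2×2} be continuous with ‖Q‖_∞ := sup_{x ∈ ℝ} ‖Q(x)‖ < ∞, and let γ > 0. Suppose that for every w ∈ L²(ℝ, ℂ²) one has ‖Q w‖_{L²} ≥ γ ‖w‖_{L²}, where (Q w)(x) = Q(x) w(x). Then |det Q(x)| > γ²/8 for every x ∈ ℝ. -/
/-!
Testing the lower bound on indicators of small neighbourhoods of `x`, where `Q` is nearly
constant by continuity, gives the pointwise bound `γ ‖v‖ ≤ ‖Q(x) v‖`. Every eigenvalue of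
`Q(x)` then has modulus at least `γ`, and `|det Q(x)|` is the product of the moduli of the two
eigenvalues, so `|det Q(x)| ≥ γ² > γ²/8`.
-/

open MeasureTheory

/-- The continuous linear map on ℂ² (with the Euclidean norm) induced by a 2×2 complex
matrix; `‖matCLM A‖` is the operator norm of `A` on ℂ². -/
noncomputable def matCLM (A : Matrix (Fin 2) (Fin 2) ℂ) :
    EuclideanSpace ℂ (Fin 2) →L[ℂ] EuclideanSpace ℂ (Fin 2) :=
  Matrix.toEuclideanCLM (𝕜 := ℂ) A

open ENNReal

namespace Matrix

variable {n : Type*} [Fintype n] [DecidableEq n]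

theorem le_norm_of_mem_spectrum {𝕜 : Type*} [RCLike 𝕜] {A : Matrix n n 𝕜} {γ : ℝ}
    (h : ∀ v, γ * ‖v‖ ≤ ‖toEuclideanCLM (𝕜 := 𝕜) A v‖) {μ : 𝕜}
    (hμ : μ ∈ spectrum 𝕜 A) : γ ≤ ‖μ‖ := by
  rw [← spectrum_toLin', ← Module.End.hasEigenvalue_iff_mem_spectrum] at hμ
  obtain ⟨u, hu⟩ := hμ.exists_hasEigenvector
  have hAu : A *ᵥ u = μ • u := by simpa using hu.apply_eq_smul
  have hu0 : 0 < ‖WithLp.toLp 2 u‖ := norm_pos_iff.2 (by simpa using hu.2)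
  have := h (WithLp.toLp 2 u)
  rw [toEuclideanCLM_toLp, hAu, WithLp.toLp_smul, norm_smul] at this
  exact le_of_mul_le_mul_right this hu0

theorem pow_card_le_norm_det {A : Matrix n n ℂ} {γ : ℝ} (hγ : 0 ≤ γ)
    (h : ∀ v, γ * ‖v‖ ≤ ‖toEuclideanCLM (𝕜 := ℂ) A v‖) :
    γ ^ Fintype.card n ≤ ‖A.det‖ := by
  have hcard : A.charpoly.roots.card = Fintype.card n := by
    rw [IsAlgClosed.card_roots_eq_natDegree, charpoly_natDegree_eq_dim]
  calc γ ^ Fintype.card n = (A.charpoly.roots.map fun _ => γ).prod := by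
        rw [Multiset.map_const', Multiset.prod_replicate, hcard]
    _ ≤ (A.charpoly.roots.map (‖·‖)).prod :=
        Multiset.prod_map_le_prod_map₀ _ _ (fun _ _ => hγ) fun μ hμ =>
          le_norm_of_mem_spectrum h <|
            mem_spectrum_of_isRoot_charpoly (Polynomial.isRoot_of_mem_roots hμ)
    _ = ‖A.det‖ := by
        rw [det_eq_prod_roots_charpoly]
        exact (map_multiset_prod (normHom : ℂ →*₀ ℝ) _).symm

end Matrix

section Localization

variable {X : Type*} [TopologicalSpace X] [MeasurableSpace X] [OpensMeasurableSpace X]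
  {μ : Measure X} [μ.IsOpenPosMeasure] [IsLocallyFiniteMeasure μ] {p : ℝ≥0∞}

theorem le_norm_of_forall_eLpNorm_indicator_ge {F : Type*} [NormedAddCommGroup F]
    (hp0 : p ≠ 0) (hp : p ≠ ∞) {g : X → F} (hg : Continuous g) {a : ℝ}
    (h : ∀ s, MeasurableSet s → μ s < ∞ →
      ENNReal.ofReal a * μ s ^ (1 / p.toReal) ≤ eLpNorm (s.indicator g) p μ) (x : X) :
    a ≤ ‖g x‖ := by
  by_contra! hlt
  obtain ⟨c, hgc, hca⟩ := exists_between hlt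
  obtain ⟨V, hxV, hVo, hVfin⟩ :=
    (isCompact_singleton (x := x)).exists_open_superset_measure_lt_top μ
  set U := V ∩ {y | ‖g y‖ < c}
  have hUo : IsOpen U := hVo.inter (isOpen_lt hg.norm continuous_const)
  have hxU : x ∈ U := ⟨hxV rfl, hgc⟩
  have hU0 : μ U ≠ 0 := (hUo.measure_pos μ ⟨x, hxU⟩).ne'
  have hUfin : μ U < ∞ := (measure_mono Set.inter_subset_left).trans_lt hVfin
  have hc : 0 ≤ c := (norm_nonneg _).trans hgc.le
  have hupper : eLpNorm (U.indicator g) p μ ≤ ENNReal.ofReal c * μ U ^ (1 / p.toReal) := by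
    calc eLpNorm (U.indicator g) p μ ≤ eLpNorm (U.indicator fun _ => c) p μ := by
          refine eLpNorm_mono_real fun y => ?_
          by_cases hy : y ∈ U
          · simpa [hy, Real.norm_of_nonneg hc] using hy.2.le
          · simp [hy]
      _ = ENNReal.ofReal c * μ U ^ (1 / p.toReal) := by
          rw [eLpNorm_indicator_const hUo.measurableSet hp0 hp, ← ofReal_norm,
            Real.norm_of_nonneg hc]
  have hm0 : μ U ^ (1 / p.toReal) ≠ 0 := by
    simp [ENNReal.rpow_eq_zero_iff, hU0, hUfin.ne, ENNReal.toReal_pos hp0 hp]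
  have hmtop : μ U ^ (1 / p.toReal) ≠ ∞ :=
    ENNReal.rpow_ne_top_of_nonneg (by positivity) hUfin.ne
  have hac :=
    (ENNReal.mul_le_mul_iff_left hm0 hmtop).1 ((h U hUo.measurableSet hUfin).trans hupper)
  exact hca.not_ge ((ENNReal.ofReal_le_ofReal_iff hc).1 hac)

theorem mul_norm_le_norm_apply_of_forall_eLpNorm_le {E F 𝓕 : Type*} [NormedAddCommGroup E]
    [NormedAddCommGroup F] [FunLike 𝓕 E F] [ZeroHomClass 𝓕 E F]
    (hp0 : p ≠ 0) (hp : p ≠ ∞) {T : X → 𝓕} (hT : ∀ v, Continuous fun x => T x v)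
    {γ : ℝ} (hγ : 0 ≤ γ)
    (hlow : ∀ w : X → E, MemLp w p μ →
      ENNReal.ofReal γ * eLpNorm w p μ ≤ eLpNorm (fun x => T x (w x)) p μ) (x : X) (v : E) :
    γ * ‖v‖ ≤ ‖T x v‖ := by
  refine le_norm_of_forall_eLpNorm_indicator_ge (μ := μ) hp0 hp (hT v) (fun s hs hsfin => ?_) x
  have hTw : (fun x => T x (s.indicator (fun _ => v) x)) = s.indicator fun x => T x v := by
    funext y
    by_cases hy : y ∈ s <;> simp [hy]
  have := hlow _ (memLp_indicator_const p hs v (Or.inr hsfin.ne))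
  rwa [hTw, eLpNorm_indicator_const hs hp0 hp, ← mul_assoc, ← ofReal_norm,
    ← ENNReal.ofReal_mul hγ] at this

end Localization

theorem det_lower_bound_of_multiplication_bounded_below_general
    (Q : ℝ → Matrix (Fin 2) (Fin 2) ℂ) (hQc : Continuous Q)
    (γ : ℝ) (hγ : 0 < γ)
    (hlow : ∀ w : ℝ → EuclideanSpace ℂ (Fin 2), MemLp w 2 (volume : Measure ℝ) →
      ENNReal.ofReal γ * eLpNorm w 2 (volume : Measure ℝ) ≤
        eLpNorm (fun x => matCLM (Q x) (w x)) 2 (volume : Measure ℝ)) :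
    ∀ x, γ ^ 2 / 8 < ‖(Q x).det‖ := by
  intro x
  have hcont : ∀ v, Continuous fun x => matCLM (Q x) v := fun v =>
    (PiLp.continuous_toLp 2 _).comp (hQc.matrix_mulVec continuous_const)
  have hpointwise :=
    mul_norm_le_norm_apply_of_forall_eLpNorm_le two_ne_zero ofNat_ne_top hcont hγ.le hlow x
  have hdet : γ ^ 2 ≤ ‖(Q x).det‖ := by
    simpa using Matrix.pow_card_le_norm_det hγ.le hpointwise
  have hγ2 : 0 < γ ^ 2 := by positivity
  linarith

/-- if the multiplication operator by the continuous bounded matrix-valued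
function `Q` is bounded below by `γ > 0` on L²(ℝ, ℂ²), then `|det Q(x)| > γ²/8`
for every `x`. -/
theorem det_lower_bound_of_multiplication_bounded_below
    (Q : ℝ → Matrix (Fin 2) (Fin 2) ℂ) (hQc : Continuous Q)
    (hb : BddAbove (Set.range fun x => ‖matCLM (Q x)‖))
    (γ : ℝ) (hγ : 0 < γ)
    (hlow : ∀ w : ℝ → EuclideanSpace ℂ (Fin 2), MemLp w 2 (volume : Measure ℝ) →
      ENNReal.ofReal γ * eLpNorm w 2 (volume : Measure ℝ) ≤
        eLpNorm (fun x => matCLM (Q x) (w x)) 2 (volume : Measure ℝ)) :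
    ∀ x, γ ^ 2 / 8 < ‖(Q x).det‖ :=
  det_lower_bound_of_multiplication_bounded_below_general Q hQc γ hγ hlow
end

section
/- Let Q : ℝ → ℂ^{2×2} be continuous with ‖Q‖_∞ := sup_{x ∈ ℝ} ‖Q(x)‖ < ∞, and let M_Q be the bounded multiplication operator on L²(ℝ, ℂ²) given by (M_Q w)(x) = Q(x) w(x). Then for λ ∈ ℂ, λ belongs to the spectrum of M_Q (as an element of the Banach algebra of bounded linear operators on L²(ℝ, ℂ²)) if and only if for every ε > 0 there exists x ∈ ℝ such that |det(λ I − Q(x))| < ε; equivalently, if and only if inf_{x ∈ ℝ} |det(λ I − Q(x))| = 0. -/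
open MeasureTheory

/-!
If `|det (z - Q x)| ≥ ε` everywhere, the pointwise inverse `(z - Q x)⁻¹ = adj / det` is continuous
and bounded by `3 ‖z - Q x‖ / ε` (for `2 × 2` matrices `adj A = tr A - A`), so multiplication by
it inverts `z - M_Q`. Conversely, an invertible `z - M_Q` is bounded below by some `c > 0`; testing
it on a vector times the indicator of a small neighbourhood of `x` shows that each matrix
`z - Q x` is bounded below by `c`, and then `A * adj A = det A` together with `adj (adj A) = A`
gives `c ^ 2 ≤ 3 |det (z - Q x)|`.
-/

open scoped ENNReal

namespace MeasureTheory.Lp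

variable {α 𝕜 E : Type*} [MeasurableSpace α] {μ : Measure α} [NontriviallyNormedField 𝕜]
  [NormedAddCommGroup E] [NormedSpace 𝕜 E] {p : ℝ≥0∞} [Fact (1 ≤ p)]

def IsMultiplicationOperator (T : Lp E p μ →L[𝕜] Lp E p μ) (F : α → E →L[𝕜] E) : Prop :=
  ∀ w, ∀ᵐ x ∂μ, T w x = F x (w x)

theorem isMultiplicationOperator_algebraMap (c : 𝕜) :
    IsMultiplicationOperator (algebraMap 𝕜 (Lp E p μ →L[𝕜] Lp E p μ) c)
      (fun _ => algebraMap 𝕜 (E →L[𝕜] E) c) := fun w => by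
  filter_upwards [Lp.coeFn_smul c w] with x hx
  simpa [Algebra.algebraMap_eq_smul_one] using hx

theorem exists_isMultiplicationOperator {G : α → E →L[𝕜] E} (hG : AEStronglyMeasurable G μ)
    {C : ℝ} (hC : ∀ᵐ x ∂μ, ‖G x‖ ≤ C) :
    ∃ S : Lp E p μ →L[𝕜] Lp E p μ, IsMultiplicationOperator S G := by
  have hG' : MemLp G ∞ μ := memLp_top_of_bound hG C hC
  let B := ContinuousLinearMap.id 𝕜 (E →L[𝕜] E)
  refine ⟨B.holderL μ ∞ p p hG'.toLp, fun w => ?_⟩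
  filter_upwards [B.coeFn_holder (r := p) hG'.toLp w, hG'.coeFn_toLp] with x hx hGx
  simp [hx, hGx, B]

namespace IsMultiplicationOperator

variable {T S : Lp E p μ →L[𝕜] Lp E p μ} {F G : α → E →L[𝕜] E}

theorem ext (hT : IsMultiplicationOperator T F) (hS : IsMultiplicationOperator S G)
    (hFG : F =ᵐ[μ] G) : T = S := by
  ext1 w
  refine Lp.ext ?_
  filter_upwards [hT w, hS w, hFG] with x hTx hSx hx
  rw [hTx, hSx, hx]

theorem one : IsMultiplicationOperator (1 : Lp E p μ →L[𝕜] Lp E p μ) (fun (_ : α) => 1) :=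
  fun _ => ae_of_all _ fun _ => rfl

theorem mul (hT : IsMultiplicationOperator T F) (hS : IsMultiplicationOperator S G) :
    IsMultiplicationOperator (T * S) (fun x => F x * G x) := fun w => by
  filter_upwards [hT (S w), hS w] with x hTx hSx
  exact hTx.trans (congrArg (F x) hSx)

theorem sub (hT : IsMultiplicationOperator T F) (hS : IsMultiplicationOperator S G) :
    IsMultiplicationOperator (T - S) (fun x => F x - G x) := fun w => by
  filter_upwards [hT w, hS w, Lp.coeFn_sub (T w) (S w)] with x hTx hSx hx
  rw [FunLike.coe_sub, Pi.sub_apply, hx, Pi.sub_apply, hTx, hSx]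
  rfl

theorem isUnit (hT : IsMultiplicationOperator T F) (hG : AEStronglyMeasurable G μ) {C : ℝ}
    (hC : ∀ᵐ x ∂μ, ‖G x‖ ≤ C) (hFG : ∀ᵐ x ∂μ, F x * G x = 1) (hGF : ∀ᵐ x ∂μ, G x * F x = 1) :
    IsUnit T := by
  obtain ⟨S, hS⟩ := exists_isMultiplicationOperator (p := p) hG hC
  exact ⟨⟨T, S, (hT.mul hS).ext one hFG, (hS.mul hT).ext one hGF⟩, rfl⟩

/-- If `‖F x v‖ < c ‖v‖`, then `T` fails the lower bound `c` on `v` times the indicator of a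
neighbourhood of `x` on which this strict inequality persists. -/
theorem mul_norm_le_norm_apply [TopologicalSpace α] [OpensMeasurableSpace α] [μ.IsOpenPosMeasure]
    [IsLocallyFiniteMeasure μ] (hT : IsMultiplicationOperator T F)
    (hF : ∀ v, Continuous fun x => F x v) {c : ℝ} (hc : ∀ w, c * ‖w‖ ≤ ‖T w‖) (x : α) (v : E) :
    c * ‖v‖ ≤ ‖F x v‖ := by
  by_contra! h
  have hv : 0 < ‖v‖ := norm_pos_iff.2 fun hv => by simp [hv] at h
  obtain ⟨d, hFd, hdc⟩ := exists_between ((div_lt_iff₀ hv).2 h)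
  obtain ⟨V, hxV, hVo, hVμ⟩ := μ.exists_isOpen_measure_lt_top x
  set U := V ∩ {y | ‖F y v‖ < d * ‖v‖}
  have hUo : IsOpen U := hVo.inter (isOpen_lt (hF v).norm continuous_const)
  have hUpos : 0 < μ U := hUo.measure_pos μ ⟨x, hxV, (div_lt_iff₀ hv).1 hFd⟩
  have hUμ : μ U ≠ ∞ := (measure_mono Set.inter_subset_left |>.trans_lt hVμ).ne
  set w := indicatorConstLp p hUo.measurableSet hUμ v
  have hw : 0 < ‖w‖ := by
    have hp : p ≠ 0 := (zero_lt_one.trans_le Fact.out).ne'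
    have : 0 < μ.real U := ENNReal.toReal_pos hUpos.ne' hUμ
    rw [norm_indicatorConstLp' hp hUpos.ne']
    positivity
  have hTw : ‖T w‖ ≤ d * ‖w‖ := by
    refine norm_le_mul_norm_of_ae_le_mul ?_
    filter_upwards [hT w, indicatorConstLp_coeFn (p := p) (hs := hUo.measurableSet) (hμs := hUμ)
      (c := v)] with y hTy hwy
    rw [hTy, hwy]
    by_cases hy : y ∈ U
    · simpa [Set.indicator_of_mem hy] using hy.2.le
    · simp [Set.indicator_of_notMem hy]
  exact hdc.not_ge (le_of_mul_le_mul_right ((hc w).trans hTw) hw)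

end IsMultiplicationOperator

end MeasureTheory.Lp

theorem IsUnit.exists_pos_mul_norm_le_norm_apply {𝕜 E : Type*} [NontriviallyNormedField 𝕜]
    [NormedAddCommGroup E] [NormedSpace 𝕜 E] {T : E →L[𝕜] E} (hT : IsUnit T) :
    ∃ c > 0, ∀ w, c * ‖w‖ ≤ ‖T w‖ := by
  obtain ⟨u, rfl⟩ := hT
  exact antilipschitzWith_iff_exists_mul_le_norm.1
    ⟨_, (ContinuousLinearEquiv.unitsEquiv 𝕜 E u).antilipschitz⟩

namespace Matrix

variable {𝕜 : Type*} [RCLike 𝕜]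

theorem continuous_toEuclideanCLM {n : Type*} [Fintype n] [DecidableEq n] :
    Continuous (toEuclideanCLM (n := n) (𝕜 := 𝕜)) :=
  LinearMap.continuous_of_finiteDimensional
    (toEuclideanCLM (n := n) (𝕜 := 𝕜)).toAlgEquiv.toLinearMap

theorem adjugate_fin_two_eq_trace_smul_one_sub {R : Type*} [CommRing R]
    (A : Matrix (Fin 2) (Fin 2) R) : A.adjugate = A.trace • 1 - A := by
  ext i j
  fin_cases i <;> fin_cases j <;> simp [adjugate_fin_two, trace_fin_two]

section L2OpNorm

open scoped Matrix.Norms.L2Operator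

theorem norm_entry_le_l2_opNorm {m n : Type*} [Fintype m] [Fintype n] [DecidableEq n]
    (A : Matrix m n 𝕜) (i : m) (j : n) : ‖A i j‖ ≤ ‖A‖ := by
  calc ‖A i j‖ = ‖((EuclideanSpace.equiv m 𝕜).symm (A *ᵥ EuclideanSpace.single j 1)).ofLp i‖ := by
        simp [mulVec_single]
    _ ≤ ‖(EuclideanSpace.equiv m 𝕜).symm (A *ᵥ EuclideanSpace.single j 1)‖ := PiLp.norm_apply_le _ i
    _ ≤ ‖A‖ := by simpa using A.l2_opNorm_mulVec (EuclideanSpace.single j 1)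

theorem l2_opNorm_adjugate_fin_two_le (A : Matrix (Fin 2) (Fin 2) 𝕜) :
    ‖A.adjugate‖ ≤ 3 * ‖A‖ := by
  have htr : ‖A.trace‖ ≤ 2 * ‖A‖ := by
    rw [trace_fin_two]
    linarith [norm_add_le (A 0 0) (A 1 1), A.norm_entry_le_l2_opNorm 0 0,
      A.norm_entry_le_l2_opNorm 1 1]
  calc ‖A.adjugate‖ ≤ ‖A.trace‖ * ‖(1 : Matrix (Fin 2) (Fin 2) 𝕜)‖ + ‖A‖ := by
        rw [adjugate_fin_two_eq_trace_smul_one_sub]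
        exact (norm_sub_le _ _).trans (add_le_add_left (norm_smul_le _ _) _)
    _ ≤ 3 * ‖A‖ := by rw [norm_one]; linarith

theorem l2_opNorm_inv_fin_two_le (A : Matrix (Fin 2) (Fin 2) 𝕜) :
    ‖A⁻¹‖ ≤ 3 * ‖A‖ / ‖A.det‖ := by
  rw [inv_def, Ring.inverse_eq_inv', norm_smul, norm_inv, inv_mul_eq_div]
  gcongr
  exact A.l2_opNorm_adjugate_fin_two_le

theorem sq_le_three_mul_norm_det_fin_two {A : Matrix (Fin 2) (Fin 2) 𝕜} {c : ℝ} (hc : 0 < c)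
    (hA : ∀ v, c * ‖v‖ ≤ ‖toEuclideanCLM (n := Fin 2) (𝕜 := 𝕜) A v‖) :
    c ^ 2 ≤ 3 * ‖A.det‖ := by
  have hcA : c ≤ ‖A‖ := by
    rw [cstar_norm_def]
    simpa using (hA (EuclideanSpace.single 0 1)).trans
      ((toEuclideanCLM (n := Fin 2) (𝕜 := 𝕜) A).le_opNorm _)
  have hadj : ‖A.adjugate‖ ≤ ‖A.det‖ / c := by
    refine ContinuousLinearMap.opNorm_le_bound _ (by positivity) fun v => ?_
    rw [div_mul_eq_mul_div, le_div_iff₀ hc, mul_comm]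
    calc c * ‖toEuclideanCLM (n := Fin 2) (𝕜 := 𝕜) A.adjugate v‖
        ≤ ‖toEuclideanCLM (n := Fin 2) (𝕜 := 𝕜) (A * A.adjugate) v‖ := by
          rw [map_mul]; exact hA _
      _ = ‖A.det‖ * ‖v‖ := by simp [mul_adjugate, norm_smul]
  have hA3 : ‖A‖ ≤ 3 * ‖A.adjugate‖ := by
    simpa [adjugate_adjugate'] using A.adjugate.l2_opNorm_adjugate_fin_two_le
  calc c ^ 2 ≤ c * (3 * (‖A.det‖ / c)) := by
        rw [sq]; gcongr; exact hcA.trans (hA3.trans (by gcongr))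
    _ = 3 * ‖A.det‖ := by field_simp

end L2OpNorm

end Matrix

namespace MeasureTheory.Lp.IsMultiplicationOperator

open scoped Matrix.Norms.L2Operator

variable {α 𝕜 : Type*} [MeasurableSpace α] {μ : Measure α} [RCLike 𝕜] {p : ℝ≥0∞} [Fact (1 ≤ p)]

theorem isUnit_of_le_norm_det [TopologicalSpace α] [OpensMeasurableSpace α]
    {T : Lp (EuclideanSpace 𝕜 (Fin 2)) p μ →L[𝕜] Lp (EuclideanSpace 𝕜 (Fin 2)) p μ}
    {Q : α → Matrix (Fin 2) (Fin 2) 𝕜} {z : 𝕜}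
    (hT : IsMultiplicationOperator T fun x =>
      Matrix.toEuclideanCLM (n := Fin 2) (𝕜 := 𝕜) (z • 1 - Q x))
    (hQ : Continuous Q) (hb : BddAbove (Set.range fun x => ‖Q x‖)) {ε : ℝ} (hε : 0 < ε)
    (hdet : ∀ x, ε ≤ ‖(z • 1 - Q x).det‖) : IsUnit T := by
  obtain ⟨M, hM⟩ := hb
  set A := fun x => z • (1 : Matrix (Fin 2) (Fin 2) 𝕜) - Q x
  have hdet0 : ∀ x, IsUnit (A x).det := fun x =>
    (norm_pos_iff.1 (hε.trans_le (hdet x))).isUnit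
  have hinv : Continuous fun x => (A x)⁻¹ := continuous_iff_continuousAt.2 fun x =>
    (continuousAt_matrix_inv _ (NormedRing.inverse_continuousAt (hdet0 x).unit)).comp
      (continuous_const.sub hQ).continuousAt
  have hAM : ∀ x, ‖A x‖ ≤ ‖z‖ + M := fun x => by
    calc ‖A x‖ ≤ ‖z • (1 : Matrix (Fin 2) (Fin 2) 𝕜)‖ + ‖Q x‖ := norm_sub_le _ _
      _ ≤ ‖z‖ + M := by rw [norm_smul, norm_one, mul_one]; gcongr; exact hM ⟨x, rfl⟩
  refine hT.isUnit (G := fun x => Matrix.toEuclideanCLM (n := Fin 2) (𝕜 := 𝕜) (A x)⁻¹)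
    (C := 3 * (‖z‖ + M) / ε) (Matrix.continuous_toEuclideanCLM.comp hinv).aestronglyMeasurable
    (ae_of_all _ fun x => ?_) (ae_of_all _ fun x => ?_) (ae_of_all _ fun x => ?_)
  · calc ‖(A x)⁻¹‖ ≤ 3 * ‖A x‖ / ‖(A x).det‖ := (A x).l2_opNorm_inv_fin_two_le
      _ ≤ 3 * (‖z‖ + M) / ε :=
        div_le_div₀ (by linarith [norm_nonneg (A x), hAM x]) (by linarith [hAM x]) hε (hdet x)
  · rw [← map_mul, Matrix.mul_nonsing_inv _ (hdet0 x), map_one]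
  · rw [← map_mul, Matrix.nonsing_inv_mul _ (hdet0 x), map_one]

end MeasureTheory.Lp.IsMultiplicationOperator

/-- for the multiplication operator `M_Q` (realized as a bounded operator `T`
on `L²(ℝ, ℂ²)` acting pointwise by the continuous bounded matrix function `Q`), a complex
number `z` lies in the spectrum of `T` iff for every `ε > 0` there is an `x ∈ ℝ` with
`|det(z I − Q(x))| < ε`. -/
theorem multiplication_operator_spectrum_iff
    (Q : ℝ → Matrix (Fin 2) (Fin 2) ℂ) (hQc : Continuous Q)
    (hb : BddAbove (Set.range fun x => ‖matCLM (Q x)‖))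
    (T : Lp (EuclideanSpace ℂ (Fin 2)) 2 (volume : Measure ℝ) →L[ℂ]
          Lp (EuclideanSpace ℂ (Fin 2)) 2 (volume : Measure ℝ))
    (hT : ∀ w, ∀ᵐ x ∂(volume : Measure ℝ), (T w) x = matCLM (Q x) (w x)) :
    ∀ z : ℂ, z ∈ spectrum ℂ T ↔
      ∀ ε > 0, ∃ x : ℝ,
        ‖(z • (1 : Matrix (Fin 2) (Fin 2) ℂ) - Q x).det‖ < ε := by
  intro z
  have hzT : Lp.IsMultiplicationOperator (algebraMap ℂ _ z - T)
      fun x => matCLM (z • 1 - Q x) := by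
    simpa [matCLM, Algebra.algebraMap_eq_smul_one] using
      (Lp.isMultiplicationOperator_algebraMap z).sub hT
  rw [spectrum.mem_iff]
  constructor
  · intro hz ε hε
    by_contra! hdet
    exact hz (hzT.isUnit_of_le_norm_det hQc hb hε hdet)
  · intro hsmall hunit
    obtain ⟨c, hc, hcz⟩ := hunit.exists_pos_mul_norm_le_norm_apply
    have hcont : ∀ v, Continuous fun x => matCLM (z • 1 - Q x) v := fun v =>
      (Matrix.continuous_toEuclideanCLM.comp (continuous_const.sub hQc)).clm_apply continuous_const
    obtain ⟨x, hx⟩ := hsmall (c ^ 2 / 3) (by positivity)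
    have hcx := Matrix.sq_le_three_mul_norm_det_fin_two hc (hzT.mul_norm_le_norm_apply hcont hcz x)
    linarith
end

section
/- Let c ∈ ℝ with c ≠ 0, let G > 0, let 0 < Ω < ∞, and let β ∈ ℝ. Define Q : ℝ → ℂ^{2×2} by Q(ω) = c · exp((G/2)(1 − ω²/Ω²)) · R(β ω²/2), where R(b) = [[cos b, −sin b], [sin b, cos b]], and let M_Q be the bounded multiplication operator on L²(ℝ, ℂ²) given by (M_Q w)(ω) = Q(ω) w(ω). Then the spectrum of M_Q (as an element of the Banach algebra of bounded linear operators on L²(ℝ, ℂ²)) equals {λ₊(ω) : ω ∈ ℝ} ∪ {λ₋(ω) : ω ∈ ℝ} ∪ {0}, where λ_±(ω) = c · exp((G/2)(1 − ω²/Ω²)) · exp(± i β ω²/2). -/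
/-!
Every `Q ω` is `λ₊(ω) P + λ₋(ω) (1 - P)` for one fixed idempotent `P`, the spectral projection of
the rotation matrices onto their common eigenline `ℂ (1, -i)`, so `T` is multiplication by two
continuous scalar symbols on complementary subspaces. If `z` stays at positive distance from both
symbols, `(z - λ₊)⁻¹ P + (z - λ₋)⁻¹ (1 - P)` is a bounded measurable pointwise inverse and yields
the resolvent; a value `λ±(ω₀)` is an approximate eigenvalue, with indicators of small balls
around `ω₀` times an eigenvector as approximate eigenvectors. So the spectrum is the closure of
the two spirals, and as `G > 0` both tend to `0` when `|ω| → ∞`, the closure adds just `0`.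
-/

open MeasureTheory

open Filter Topology Set
open scoped ENNReal

theorem ContinuousLinearMap.not_isUnit_of_forall_exists_norm_apply_le {𝕜 F : Type*}
    [NontriviallyNormedField 𝕜] [NormedAddCommGroup F] [NormedSpace 𝕜 F] {S : F →L[𝕜] F}
    (h : ∀ ε > 0, ∃ w ≠ 0, ‖S w‖ ≤ ε * ‖w‖) : ¬IsUnit S := by
  rintro ⟨u, rfl⟩
  set K := ‖(↑u⁻¹ : F →L[𝕜] F)‖
  obtain ⟨w, hw, hSw⟩ := h (1 / (K + 1)) (by positivity)
  have hK : K / (K + 1) < 1 := (div_lt_one (by positivity)).mpr (lt_add_one K)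
  have hle : ‖w‖ ≤ K / (K + 1) * ‖w‖ :=
    calc ‖w‖ = ‖(↑u⁻¹ : F →L[𝕜] F) ((u : F →L[𝕜] F) w)‖ :=
          congrArg norm (DFunLike.congr_fun u.inv_mul w).symm
      _ ≤ K * ‖(u : F →L[𝕜] F) w‖ := (↑u⁻¹ : F →L[𝕜] F).le_opNorm _
      _ ≤ K * (1 / (K + 1) * ‖w‖) := by gcongr
      _ = K / (K + 1) * ‖w‖ := by ring
  nlinarith [norm_pos_iff.mpr hw]

theorem IsIdempotentElem.smul_add_smul_one_sub_mul {𝕜 R : Type*} [CommRing 𝕜] [Ring R] [Algebra 𝕜 R]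
    {P : R} (hP : IsIdempotentElem P) (a b a' b' : 𝕜) :
    (a • P + b • (1 - P)) * (a' • P + b' • (1 - P)) = (a * a') • P + (b * b') • (1 - P) := by
  simp only [add_mul, mul_add, smul_mul_smul_comm, hP.eq, hP.one_sub.eq, hP.mul_one_sub_self,
    hP.one_sub_mul_self, smul_zero, add_zero, zero_add]

section MultiplicationOperator

variable {X 𝕜 E : Type*} [MeasurableSpace X] [RCLike 𝕜] [NormedAddCommGroup E] [NormedSpace 𝕜 E]
  {p : ℝ≥0∞} [Fact (1 ≤ p)] {μ : Measure X}

def IsMultiplicationOperator (T : Lp E p μ →L[𝕜] Lp E p μ) (A : X → E →L[𝕜] E) : Prop :=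
  ∀ w, ∀ᵐ x ∂μ, T w x = A x (w x)

namespace IsMultiplicationOperator

variable {T : Lp E p μ →L[𝕜] Lp E p μ} {A : X → E →L[𝕜] E}

theorem algebraMap_sub (hT : IsMultiplicationOperator T A) (z : 𝕜) :
    IsMultiplicationOperator (algebraMap 𝕜 _ z - T) (fun x => algebraMap 𝕜 _ z - A x) := by
  intro w
  have hw : (algebraMap 𝕜 _ z - T) w = z • w - T w := by simp [Algebra.algebraMap_eq_smul_one]
  filter_upwards [Lp.coeFn_sub (z • w) (T w), Lp.coeFn_smul z w, hT w] with x hsub hsmul hTw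
  rw [hw, hsub, Pi.sub_apply, hsmul, Pi.smul_apply, hTw]
  simp [Algebra.algebraMap_eq_smul_one]

theorem isUnit [CompleteSpace E] (hT : IsMultiplicationOperator T A) {B : X → E →L[𝕜] E}
    (hB : AEStronglyMeasurable B μ) {C : ℝ} (hBC : ∀ x, ‖B x‖ ≤ C)
    (hBA : ∀ x, B x * A x = 1) (hAB : ∀ x, A x * B x = 1) : IsUnit T := by
  refine ContinuousLinearMap.isUnit_iff_bijective.mpr ⟨fun w₁ w₂ h => ?_, fun v => ?_⟩
  · rw [← sub_eq_zero, Lp.eq_zero_iff_ae_eq_zero]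
    filter_upwards [hT (w₁ - w₂), Lp.coeFn_zero E p μ] with x hTx h0
    rw [map_sub, h, sub_self, h0] at hTx
    calc (w₁ - w₂) x = B x (A x ((w₁ - w₂) x)) := (DFunLike.congr_fun (hBA x) _).symm
      _ = 0 := by rw [← hTx, Pi.zero_apply, map_zero]
  · have hBv : MemLp (fun x => B x (v x)) p μ :=
      (Lp.memLp v).of_le_mul ((ContinuousLinearMap.id 𝕜 (E →L[𝕜] E)).aestronglyMeasurable_comp₂
        hB (Lp.aestronglyMeasurable v))
        (.of_forall fun x => (B x).le_of_opNorm_le (hBC x) (v x))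
    refine ⟨hBv.toLp _, Lp.ext ?_⟩
    filter_upwards [hT (hBv.toLp _), hBv.coeFn_toLp] with x hTx hx
    rw [hTx, hx]
    exact DFunLike.congr_fun (hAB x) (v x)

theorem notMem_spectrum [TopologicalSpace X] [OpensMeasurableSpace X] [CompleteSpace E]
    {P : E →L[𝕜] E} {f g : X → 𝕜}
    (hT : IsMultiplicationOperator T fun x => f x • P + g x • (1 - P)) (hP : IsIdempotentElem P)
    (hf : Continuous f) (hg : Continuous g) {z : 𝕜} {d : ℝ} (hd : 0 < d)
    (hdf : ∀ x, d ≤ ‖z - f x‖) (hdg : ∀ x, d ≤ ‖z - g x‖) : z ∉ spectrum 𝕜 T := by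
  have hf₀ : ∀ x, z - f x ≠ 0 := fun x => norm_pos_iff.mp (hd.trans_le (hdf x))
  have hg₀ : ∀ x, z - g x ≠ 0 := fun x => norm_pos_iff.mp (hd.trans_le (hdg x))
  have hTz : IsMultiplicationOperator (algebraMap 𝕜 _ z - T)
      fun x => (z - f x) • P + (z - g x) • (1 - P) := by
    convert hT.algebraMap_sub z using 2 with x
    rw [Algebra.algebraMap_eq_smul_one]
    simp only [sub_smul, smul_sub]
    abel
  rw [spectrum.mem_iff, not_not]
  refine hTz.isUnit (B := fun x => (z - f x)⁻¹ • P + (z - g x)⁻¹ • (1 - P))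
    (C := d⁻¹ * ‖P‖ + d⁻¹ * ‖1 - P‖) ?_ (fun x => ?_) (fun x => ?_) (fun x => ?_)
  · exact (((continuous_const.sub hf).inv₀ hf₀).aestronglyMeasurable.smul_const P).add
      (((continuous_const.sub hg).inv₀ hg₀).aestronglyMeasurable.smul_const (1 - P))
  · calc ‖(z - f x)⁻¹ • P + (z - g x)⁻¹ • (1 - P)‖
        ≤ ‖z - f x‖⁻¹ * ‖P‖ + ‖z - g x‖⁻¹ * ‖1 - P‖ := by
          rw [← norm_inv, ← norm_inv, ← norm_smul, ← norm_smul]; exact norm_add_le _ _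
      _ ≤ d⁻¹ * ‖P‖ + d⁻¹ * ‖1 - P‖ := by
          gcongr
          exacts [hdf x, hdg x]
  · rw [hP.smul_add_smul_one_sub_mul, inv_mul_cancel₀ (hf₀ x), inv_mul_cancel₀ (hg₀ x),
      one_smul, one_smul, add_sub_cancel]
  · rw [hP.smul_add_smul_one_sub_mul, mul_inv_cancel₀ (hf₀ x), mul_inv_cancel₀ (hg₀ x),
      one_smul, one_smul, add_sub_cancel]

variable [TopologicalSpace X] [OpensMeasurableSpace X] [μ.IsOpenPosMeasure]
  [IsLocallyFiniteMeasure μ]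

theorem mem_spectrum (hT : IsMultiplicationOperator T A) {v : E} (hv : v ≠ 0) {x₀ : X}
    (hA : ContinuousAt (fun x => A x v) x₀) {z : 𝕜} (hz : A x₀ v = z • v) :
    z ∈ spectrum 𝕜 T := by
  rw [spectrum.mem_iff]
  refine ContinuousLinearMap.not_isUnit_of_forall_exists_norm_apply_le fun ε hε => ?_
  obtain ⟨s, hs, hμs⟩ := μ.finiteAt_nhds x₀
  have hnear := Metric.tendsto_nhds.mp hA (ε * ‖v‖) (by positivity [norm_pos_iff.mpr hv])
  set t := interior (s ∩ {x | dist (A x v) (A x₀ v) < ε * ‖v‖})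
  have ht : t ∈ 𝓝 x₀ := interior_mem_nhds.mpr (inter_mem hs hnear)
  have hμt : μ t ≠ ∞ :=
    ((measure_mono (interior_subset.trans inter_subset_left)).trans_lt hμs).ne
  have hμt₀ : 0 < μ.real t := ENNReal.toReal_pos (μ.measure_pos_of_mem_nhds ht).ne' hμt
  have htm : MeasurableSet t := isOpen_interior.measurableSet
  refine ⟨indicatorConstLp p htm hμt v, ?_, ?_⟩
  · rw [← norm_pos_iff, norm_indicatorConstLp' (zero_lt_one.trans_le Fact.out).ne'
      (μ.measure_pos_of_mem_nhds ht).ne']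
    exact mul_pos (norm_pos_iff.mpr hv) (Real.rpow_pos_of_pos hμt₀ _)
  refine Lp.norm_le_mul_norm_of_ae_le_mul ?_
  filter_upwards [hT.algebraMap_sub z (indicatorConstLp p htm hμt v),
    indicatorConstLp_coeFn (hs := htm) (hμs := hμt) (c := v)]
    with x hx hind
  rw [hx, hind]
  by_cases hxt : x ∈ t
  · have hdist : dist (A x v) (A x₀ v) < ε * ‖v‖ := (interior_subset hxt).2
    rw [indicator_of_mem hxt]
    calc ‖(algebraMap 𝕜 _ z - A x) v‖ = dist (A x v) (A x₀ v) := by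
          rw [hz, dist_eq_norm, norm_sub_rev]; simp [Algebra.algebraMap_eq_smul_one]
      _ ≤ ε * ‖v‖ := hdist.le
  · simp [indicator_of_notMem hxt]

theorem range_subset_spectrum {P : E →L[𝕜] E} {f g : X → 𝕜}
    (hT : IsMultiplicationOperator T fun x => f x • P + g x • (1 - P)) (hP : IsIdempotentElem P)
    (hP₀ : P ≠ 0) (hf : Continuous f) : range f ⊆ spectrum 𝕜 T := by
  obtain ⟨u, hu⟩ : ∃ u, P u ≠ 0 := by
    by_contra! h
    exact hP₀ (ContinuousLinearMap.ext h)
  have hPu : P (P u) = P u := DFunLike.congr_fun hP.eq u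
  have heig : ∀ x, (f x • P + g x • (1 - P)) (P u) = f x • P u := by
    intro x
    simp [hPu]
  rintro _ ⟨x₀, rfl⟩
  refine hT.mem_spectrum hu ?_ (heig x₀)
  simp_rw [heig]
  exact (hf.smul continuous_const).continuousAt

theorem spectrum_eq_closure_range [CompleteSpace E] {P : E →L[𝕜] E} {f g : X → 𝕜}
    (hT : IsMultiplicationOperator T fun x => f x • P + g x • (1 - P)) (hP : IsIdempotentElem P)
    (hP₀ : P ≠ 0) (hP₁ : P ≠ 1) (hf : Continuous f) (hg : Continuous g) :
    spectrum 𝕜 T = closure (range f ∪ range g) := by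
  refine subset_antisymm (fun z hz => ?_)
    (closure_minimal (union_subset ?_ ?_) (spectrum.isClosed T))
  · by_contra hzc
    rw [Metric.mem_closure_iff] at hzc
    push Not at hzc
    obtain ⟨d, hd, hsep⟩ := hzc
    exact hT.notMem_spectrum hP hf hg hd
      (fun x => dist_eq_norm z (f x) ▸ hsep _ (.inl ⟨x, rfl⟩))
      (fun x => dist_eq_norm z (g x) ▸ hsep _ (.inr ⟨x, rfl⟩)) hz
  · exact hT.range_subset_spectrum hP hP₀ hf
  · have hT' : IsMultiplicationOperator T fun x => g x • (1 - P) + f x • (1 - (1 - P)) := by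
      simpa only [sub_sub_cancel, add_comm] using hT
    exact hT'.range_subset_spectrum hP.one_sub (sub_ne_zero.mpr hP₁.symm) hg

end IsMultiplicationOperator

end MultiplicationOperator

theorem Filter.Tendsto.closure_range_of_cocompact {X Y : Type*} [TopologicalSpace X]
    [TopologicalSpace Y] [T2Space Y] [(cocompact X).NeBot] {f : X → Y} {y : Y}
    (hf : Tendsto f (cocompact X) (𝓝 y)) (hfc : Continuous f) :
    closure (range f) = insert y (range f) :=
  subset_antisymm
    (closure_minimal (subset_insert _ _) (hf.isCompact_insert_range_of_cocompact hfc).isClosed)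
    (insert_subset (mem_closure_of_tendsto hf (univ_mem' mem_range_self)) subset_closure)

theorem tendsto_ofReal_mul_exp_of_re_eq_zero {X : Type*} {l : Filter X} {r : X → ℝ} {z : X → ℂ}
    (hr : Tendsto r l (𝓝 0)) (hz : ∀ x, (z x).re = 0) :
    Tendsto (fun x => (r x : ℂ) * Complex.exp (z x)) l (𝓝 0) := by
  rw [tendsto_zero_iff_norm_tendsto_zero]
  simpa [Complex.norm_exp, hz] using hr.norm

theorem tendsto_mul_exp_mul_one_sub_sq_div_sq_cocompact (c : ℝ) {G Ω : ℝ} (hG : 0 < G)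
    (hΩ : Ω ≠ 0) :
    Tendsto (fun ω : ℝ => c * Real.exp (G / 2 * (1 - ω ^ 2 / Ω ^ 2))) (cocompact ℝ) (𝓝 0) := by
  have hsq : Tendsto (fun ω : ℝ => ω ^ 2) (cocompact ℝ) atTop := by
    refine ((tendsto_pow_atTop two_ne_zero).comp (tendsto_norm_cocompact_atTop (E := ℝ))).congr
      fun ω => ?_
    simp [Real.norm_eq_abs, sq_abs]
  have harg : Tendsto (fun ω : ℝ => G / 2 * (1 - ω ^ 2 / Ω ^ 2)) (cocompact ℝ) atBot := by
    have := tendsto_atBot_add_const_left _ (G / 2)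
      (hsq.const_mul_atTop_of_neg (r := -(G / 2 / Ω ^ 2)) (neg_neg_of_pos (by positivity)))
    refine this.congr fun ω => ?_
    field_simp
    ring
  simpa using (Real.tendsto_exp_atBot.comp harg).const_mul c

/-- `v vᴴ / 2` for the common eigenvector `v = (1, -i)` of the rotations, eigenvalue `e^{iθ}`. -/
noncomputable def rotationEigenprojection : Matrix (Fin 2) (Fin 2) ℂ :=
  !![1 / 2, Complex.I / 2; -Complex.I / 2, 1 / 2]

theorem isIdempotentElem_rotationEigenprojection : IsIdempotentElem rotationEigenprojection := by
  rw [IsIdempotentElem, rotationEigenprojection, Matrix.mul_fin_two]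
  ext i j
  fin_cases i <;> fin_cases j <;> simp <;> ring_nf <;> simp [Complex.I_sq] <;> ring

theorem rotationEigenprojection_ne_zero : rotationEigenprojection ≠ 0 := by
  intro h
  simpa [rotationEigenprojection] using congrFun (congrFun h 0) 0

theorem rotationEigenprojection_ne_one : rotationEigenprojection ≠ 1 := by
  intro h
  simpa [rotationEigenprojection] using congrFun (congrFun h 0) 0

theorem rotation_eq_smul_eigenprojection_add (θ : ℝ) :
    !![(Real.cos θ : ℂ), -(Real.sin θ : ℂ); (Real.sin θ : ℂ), (Real.cos θ : ℂ)] =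
      Complex.exp (Complex.I * θ) • rotationEigenprojection +
        Complex.exp (-(Complex.I * θ)) • (1 - rotationEigenprojection) := by
  have hp : Complex.exp (Complex.I * θ) = Real.cos θ + Real.sin θ * Complex.I := by
    rw [mul_comm, Complex.exp_mul_I, Complex.ofReal_cos, Complex.ofReal_sin]
  have hm : Complex.exp (-(Complex.I * θ)) = Real.cos θ - Real.sin θ * Complex.I := by
    rw [← mul_neg, mul_comm, Complex.exp_mul_I, Complex.ofReal_cos, Complex.ofReal_sin,
      Complex.cos_neg, Complex.sin_neg, neg_mul, sub_eq_add_neg]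
  rw [hp, hm, rotationEigenprojection]
  ext i j
  fin_cases i <;> fin_cases j <;> simp <;> ring_nf <;> simp [Complex.I_sq]

theorem matCLM_smul_rotation (r θ : ℝ) :
    matCLM ((r : ℂ) • !![(Real.cos θ : ℂ), -(Real.sin θ : ℂ); (Real.sin θ : ℂ), (Real.cos θ : ℂ)]) =
      ((r : ℂ) * Complex.exp (Complex.I * θ)) • matCLM rotationEigenprojection +
        ((r : ℂ) * Complex.exp (-(Complex.I * θ))) • (1 - matCLM rotationEigenprojection) := by
  rw [rotation_eq_smul_eigenprojection_add, smul_add, smul_smul, smul_smul]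
  simp only [matCLM, map_add, map_smul, map_sub, map_one]

theorem asymptotic_monodromy_spectrum_general
    (c G Ω β : ℝ) (hG : 0 < G) (hΩ : 0 < Ω)
    (Q : ℝ → Matrix (Fin 2) (Fin 2) ℂ)
    (hQ : ∀ ω : ℝ, Q ω = ((c * Real.exp (G / 2 * (1 - ω ^ 2 / Ω ^ 2)) : ℝ) : ℂ) •
      !![((Real.cos (β * ω ^ 2 / 2) : ℝ) : ℂ), -((Real.sin (β * ω ^ 2 / 2) : ℝ) : ℂ);
         ((Real.sin (β * ω ^ 2 / 2) : ℝ) : ℂ), ((Real.cos (β * ω ^ 2 / 2) : ℝ) : ℂ)])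
    (T : Lp (EuclideanSpace ℂ (Fin 2)) 2 (volume : Measure ℝ) →L[ℂ]
          Lp (EuclideanSpace ℂ (Fin 2)) 2 (volume : Measure ℝ))
    (hT : ∀ w, ∀ᵐ ω ∂(volume : Measure ℝ), (T w) ω = matCLM (Q ω) (w ω)) :
    spectrum ℂ T =
      {z : ℂ | ∃ ω : ℝ, z = ((c * Real.exp (G / 2 * (1 - ω ^ 2 / Ω ^ 2)) : ℝ) : ℂ) *
          Complex.exp (Complex.I * (β * ω ^ 2 / 2 : ℝ))} ∪
      {z : ℂ | ∃ ω : ℝ, z = ((c * Real.exp (G / 2 * (1 - ω ^ 2 / Ω ^ 2)) : ℝ) : ℂ) *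
          Complex.exp (-(Complex.I * (β * ω ^ 2 / 2 : ℝ)))} ∪
      {0} := by
  set r : ℝ → ℝ := fun ω => c * Real.exp (G / 2 * (1 - ω ^ 2 / Ω ^ 2))
  set θ : ℝ → ℝ := fun ω => β * ω ^ 2 / 2
  set lamP : ℝ → ℂ := fun ω => (r ω : ℂ) * Complex.exp (Complex.I * θ ω)
  set lamM : ℝ → ℂ := fun ω => (r ω : ℂ) * Complex.exp (-(Complex.I * θ ω))
  set P := matCLM rotationEigenprojection
  have hTP : IsMultiplicationOperator T fun ω => lamP ω • P + lamM ω • (1 - P) := fun w =>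
    (hT w).mono fun ω hω => by rw [hω, hQ, matCLM_smul_rotation]
  have hclosure (z : ℝ → ℂ) (hz : ∀ ω, (z ω).re = 0) (hcont : Continuous z) :
      closure (range fun ω => (r ω : ℂ) * Complex.exp (z ω)) =
        insert 0 (range fun ω => (r ω : ℂ) * Complex.exp (z ω)) :=
    (tendsto_ofReal_mul_exp_of_re_eq_zero
      (tendsto_mul_exp_mul_one_sub_sq_div_sq_cocompact c hG hΩ.ne') hz).closure_range_of_cocompact
      (by fun_prop)
  have hP₀ : P ≠ 0 :=
    (map_ne_zero_iff _ Matrix.toEuclideanCLM.injective).mpr rotationEigenprojection_ne_zero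
  have hP₁ : P ≠ 1 :=
    (map_ne_one_iff _ Matrix.toEuclideanCLM.injective).mpr rotationEigenprojection_ne_one
  rw [hTP.spectrum_eq_closure_range (isIdempotentElem_rotationEigenprojection.map _) hP₀ hP₁
    (by fun_prop) (by fun_prop), closure_union, hclosure _ (by simp) (by fun_prop),
    hclosure _ (by simp) (by fun_prop)]
  ext z
  simp only [mem_union, mem_insert_iff, mem_range, mem_ofPred_eq, mem_singleton_iff,
    eq_comm (b := z)]
  tauto

/-- the spectrum of the asymptotic monodromy multiplication operator with
Fourier symbol `Q(ω) = c e^{(G/2)(1-ω²/Ω²)} R(βω²/2)` is the pair of counter-rotating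
spirals `λ_±(ω) = c e^{(G/2)(1-ω²/Ω²)} e^{± i βω²/2}` together with `0`. -/
theorem asymptotic_monodromy_spectrum
    (c G Ω β : ℝ) (hc : c ≠ 0) (hG : 0 < G) (hΩ : 0 < Ω)
    (Q : ℝ → Matrix (Fin 2) (Fin 2) ℂ)
    (hQ : ∀ ω : ℝ, Q ω = ((c * Real.exp (G / 2 * (1 - ω ^ 2 / Ω ^ 2)) : ℝ) : ℂ) •
      !![((Real.cos (β * ω ^ 2 / 2) : ℝ) : ℂ), -((Real.sin (β * ω ^ 2 / 2) : ℝ) : ℂ);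
         ((Real.sin (β * ω ^ 2 / 2) : ℝ) : ℂ), ((Real.cos (β * ω ^ 2 / 2) : ℝ) : ℂ)])
    (T : Lp (EuclideanSpace ℂ (Fin 2)) 2 (volume : Measure ℝ) →L[ℂ]
          Lp (EuclideanSpace ℂ (Fin 2)) 2 (volume : Measure ℝ))
    (hT : ∀ w, ∀ᵐ ω ∂(volume : Measure ℝ), (T w) ω = matCLM (Q ω) (w ω)) :
    spectrum ℂ T =
      {z : ℂ | ∃ ω : ℝ, z = ((c * Real.exp (G / 2 * (1 - ω ^ 2 / Ω ^ 2)) : ℝ) : ℂ) *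
          Complex.exp (Complex.I * (β * ω ^ 2 / 2 : ℝ))} ∪
      {z : ℂ | ∃ ω : ℝ, z = ((c * Real.exp (G / 2 * (1 - ω ^ 2 / Ω ^ 2)) : ℝ) : ℂ) *
          Complex.exp (-(Complex.I * (β * ω ^ 2 / 2 : ℝ)))} ∪
      {0} :=
  asymptotic_monodromy_spectrum_general c G Ω β hG hΩ Q hQ T hT
end

section
/- Let c ∈ ℝ with c ≠ 0, let G > 0, let 0 < Ω < ∞, and let β ∈ ℝ. Define Q : ℝ → ℂ^{2×2} by Q(ω) = c · exp((G/2)(1 − ω²/Ω²)) · R(β ω²/2), where R(b) = [[cos b, −sin b], [sin b, cos b]]. Then the multiplication operator M_Q on L²(ℝ, ℂ²), given by (M_Q w)(ω) = Q(ω) w(ω), has no eigenvalues: for every λ ∈ ℂ and every w ∈ L²(ℝ, ℂ²), if Q(ω) w(ω) = λ w(ω) for almost every ω ∈ ℝ, then w = 0 almost everywhere. -/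
open MeasureTheory

/-!
Pointwise, `Q ω` is the real scalar `r ω = c e^{(G/2)(1 - ω²/Ω²)}` times the rotation by
`β ω² / 2`, so its eigenvalues `r ω · e^{± i β ω² / 2}` both have modulus `|r ω|`. Since
`G ≠ 0`, `|r ω|` is an injective function of `ω²`, so it equals `‖z‖` for at most two
frequencies `ω`. Off that null set `Q ω - z` is invertible, and the eigenvalue equation forces
`w ω = 0`.
-/

namespace Matrix

variable {n 𝕜 : Type*} [RCLike 𝕜] [Fintype n] [DecidableEq n]

theorem eq_zero_of_toEuclideanCLM_eq_smul {A : Matrix n n 𝕜} {z : 𝕜}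
    (hA : (A - z • 1).det ≠ 0) {v : EuclideanSpace 𝕜 n}
    (hv : toEuclideanCLM (𝕜 := 𝕜) A v = z • v) : v = 0 := by
  have hker : (A - z • 1) *ᵥ WithLp.ofLp v = 0 := by
    rw [sub_mulVec, smul_mulVec, one_mulVec, ← ofLp_toEuclideanCLM, hv, WithLp.ofLp_smul,
      sub_self]
  exact WithLp.ofLp_injective _ (eq_zero_of_mulVec_eq_zero hA hker)

end Matrix

noncomputable def rotationMatrix (b : ℝ) : Matrix (Fin 2) (Fin 2) ℂ :=
  !![((Real.cos b : ℝ) : ℂ), -((Real.sin b : ℝ) : ℂ);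
     ((Real.sin b : ℝ) : ℂ), ((Real.cos b : ℝ) : ℂ)]

theorem det_smul_rotationMatrix_sub (r b : ℝ) (z : ℂ) :
    ((r : ℂ) • rotationMatrix b - z • 1).det =
      (r * Complex.exp (b * Complex.I) - z) *
        (r * Complex.exp (((-b : ℝ) : ℂ) * Complex.I) - z) := by
  rw [Complex.exp_mul_I, Complex.exp_mul_I, Complex.ofReal_neg, Complex.cos_neg, Complex.sin_neg]
  simp only [rotationMatrix, Matrix.det_fin_two, Matrix.sub_apply, Matrix.smul_apply,
    Matrix.one_apply_eq, Matrix.one_apply_ne zero_ne_one, Matrix.one_apply_ne one_ne_zero,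
    Matrix.of_apply, Matrix.cons_val', Matrix.cons_val_zero, Matrix.cons_val_one,
    Matrix.cons_val_fin_one, Complex.ofReal_cos, Complex.ofReal_sin, smul_eq_mul]
  linear_combination (r * Complex.sin b) ^ 2 * Complex.I_sq

theorem det_smul_rotationMatrix_sub_ne_zero {r : ℝ} (b : ℝ) {z : ℂ} (hz : ‖z‖ ≠ |r|) :
    ((r : ℂ) • rotationMatrix b - z • 1).det ≠ 0 := by
  have hnorm : ∀ s : ℝ, ‖(r : ℂ) * Complex.exp (s * Complex.I)‖ = |r| := fun s => by
    rw [norm_mul, Complex.norm_exp_ofReal_mul_I, Complex.norm_real, Real.norm_eq_abs, mul_one]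
  rw [det_smul_rotationMatrix_sub]
  refine mul_ne_zero ?_ ?_ <;> refine sub_ne_zero.mpr fun h => hz ?_ <;> rw [← h, hnorm]

theorem Set.finite_setOf_sq_eq (t : ℝ) : {ω : ℝ | ω ^ 2 = t}.Finite := by
  refine (Set.toFinite {√t, -√t}).subset fun ω (hω : ω ^ 2 = t) => ?_
  have : ω ^ 2 = √t ^ 2 := by
    rw [hω, Real.sq_sqrt (hω ▸ sq_nonneg ω)]
  exact sq_eq_sq_iff_eq_or_eq_neg.mp this

theorem ae_comp_sq_ne {α : Type*} {f : ℝ → α} (hf : f.Injective) (a : α) :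
    ∀ᵐ ω ∂(volume : Measure ℝ), f (ω ^ 2) ≠ a := by
  have hfin : {ω : ℝ | f (ω ^ 2) = a}.Finite :=
    ((Set.subsingleton_singleton (a := a)).preimage hf).finite.preimage' fun t _ =>
      Set.finite_setOf_sq_eq t
  exact measure_eq_zero_iff_ae_notMem.mp (hfin.measure_zero _)

theorem mul_exp_mul_one_sub_div_injective {a k s : ℝ} (ha : a ≠ 0) (hk : k ≠ 0)
    (hs : s ≠ 0) :
    Function.Injective fun u : ℝ => a * Real.exp (k * (1 - u / s)) := by
  intro u v huv
  have := Real.exp_injective (mul_left_cancel₀ ha huv)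
  field_simp at this
  linarith

/-- the asymptotic monodromy multiplication operator with Fourier symbol
`Q(ω) = c e^{(G/2)(1-ω²/Ω²)} R(βω²/2)` has no eigenvalues: any `w ∈ L²(ℝ, ℂ²)` satisfying
`Q(ω) w(ω) = z w(ω)` for a.e. `ω` vanishes almost everywhere. -/
theorem asymptotic_monodromy_no_eigenvalues
    (c G Ω β : ℝ) (hc : c ≠ 0) (hG : 0 < G) (hΩ : 0 < Ω)
    (Q : ℝ → Matrix (Fin 2) (Fin 2) ℂ)
    (hQ : ∀ ω : ℝ, Q ω = ((c * Real.exp (G / 2 * (1 - ω ^ 2 / Ω ^ 2)) : ℝ) : ℂ) •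
      !![((Real.cos (β * ω ^ 2 / 2) : ℝ) : ℂ), -((Real.sin (β * ω ^ 2 / 2) : ℝ) : ℂ);
         ((Real.sin (β * ω ^ 2 / 2) : ℝ) : ℂ), ((Real.cos (β * ω ^ 2 / 2) : ℝ) : ℂ)]) :
    ∀ z : ℂ, ∀ w : ℝ → EuclideanSpace ℂ (Fin 2), MemLp w 2 (volume : Measure ℝ) →
      (∀ᵐ ω ∂(volume : Measure ℝ), matCLM (Q ω) (w ω) = z • w ω) →
      w =ᵐ[(volume : Measure ℝ)] 0 := by
  intro z w _ heigen
  have hmodulus : ∀ᵐ ω ∂(volume : Measure ℝ),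
      |c| * Real.exp (G / 2 * (1 - ω ^ 2 / Ω ^ 2)) ≠ ‖z‖ :=
    ae_comp_sq_ne (mul_exp_mul_one_sub_div_injective (abs_ne_zero.mpr hc) (by positivity)
      (by positivity)) ‖z‖
  filter_upwards [heigen, hmodulus] with ω hω hzω
  rw [hQ] at hω
  refine Matrix.eq_zero_of_toEuclideanCLM_eq_smul ?_ hω
  refine det_smul_rotationMatrix_sub_ne_zero _ ?_
  rwa [abs_mul, abs_of_pos (Real.exp_pos _), ne_comm]
end
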